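/- Synthesized monitors are sound and violation-complete: assuming the base regular-monitor synthesis m(·) produces, for each sHML formula ψ, a monitor that is sound (a 'no' on a prefix of t implies t ⊭ ψ, and a 'yes' implies t ⊨ ψ) and violation-complete for ψ over single infinite traces, the circuit-monitor synthesis Syn(·) defined by Syn(∃π ψ) = ⋁[m(ψ)]_k, Syn(∀π ψ) = ⋀[m(ψ)]_k, Syn(φ₁ ⊔ φ₂) = Syn(φ₁) ∨ Syn(φ₂), Syn(φ₁ ⊓ φ₂) = Syn(φ₁) ∧ Syn(φ₂), produces for every Hyper¹-sHML formula φ a monitor that is both sound and violation-complete for φ over every finite set of infinite traces. -/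
import Mathlib


inductive Verdict where
  | yes | no | end_ | inc
deriving DecidableEq

def pref {Act : Type} (t : ℕ → Act) (n : ℕ) : List Act :=
  (List.range n).map t

/-- Hyper¹-sHML formulas over an abstract type of sHML bodies. -/
inductive Hyper (ψT : Type) where
  | ex  : ψT → Hyper ψT              -- ∃π ψ
  | all : ψT → Hyper ψT              -- ∀π ψ
  | or  : Hyper ψT → Hyper ψT → Hyper ψT   -- ⊔
  | and : Hyper ψT → Hyper ψT → Hyper ψT   -- ⊓

/-- Semantics of Hyper¹-sHML over a set of infinite traces. -/
def HSat {Act ψT : Type} (SatPsi : ψT → (ℕ → Act) → Prop)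
    (T : Set (ℕ → Act)) : Hyper ψT → Prop
  | .ex ψ => ∃ t ∈ T, SatPsi ψ t
  | .all ψ => ∀ t ∈ T, SatPsi ψ t
  | .or φ₁ φ₂ => HSat SatPsi T φ₁ ∨ HSat SatPsi T φ₂
  | .and φ₁ φ₂ => HSat SatPsi T φ₁ ∧ HSat SatPsi T φ₂

/-- Acceptance predicate of the synthesized monitor Syn(φ):
`m` is the regular-monitor synthesis, giving a verdict function for each body. -/
def SynAcc {Act ψT : Type} (m : ψT → List Act → Verdict)
    (T : Set (ℕ → Act)) : Hyper ψT → Prop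
  | .ex ψ => ∃ t ∈ T, ∃ n, m ψ (pref t n) = Verdict.yes
  | .all ψ => ∀ t ∈ T, ∃ n, m ψ (pref t n) = Verdict.yes
  | .or φ₁ φ₂ => SynAcc m T φ₁ ∨ SynAcc m T φ₂
  | .and φ₁ φ₂ => SynAcc m T φ₁ ∧ SynAcc m T φ₂

/-- Rejection predicate of the synthesized monitor Syn(φ). -/
def SynRej {Act ψT : Type} (m : ψT → List Act → Verdict)
    (T : Set (ℕ → Act)) : Hyper ψT → Prop
  | .ex ψ => ∀ t ∈ T, ∃ n, m ψ (pref t n) = Verdict.no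
  | .all ψ => ∃ t ∈ T, ∃ n, m ψ (pref t n) = Verdict.no
  | .or φ₁ φ₂ => SynRej m T φ₁ ∧ SynRej m T φ₂
  | .and φ₁ φ₂ => SynRej m T φ₁ ∨ SynRej m T φ₂

theorem stmt5
    (Act ψT : Type)
    (SatPsi : ψT → (ℕ → Act) → Prop)
    (m : ψT → List Act → Verdict)
    (sound_no : ∀ ψ (t : ℕ → Act), (∃ n, m ψ (pref t n) = Verdict.no) → ¬ SatPsi ψ t)
    (sound_yes : ∀ ψ (t : ℕ → Act), (∃ n, m ψ (pref t n) = Verdict.yes) → SatPsi ψ t)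
    (violation_complete : ∀ ψ (t : ℕ → Act), ¬ SatPsi ψ t → ∃ n, m ψ (pref t n) = Verdict.no)
    : ∀ (φ : Hyper ψT) (T : Set (ℕ → Act)), T.Finite →
      (SynAcc m T φ → HSat SatPsi T φ) ∧
      (SynRej m T φ → ¬ HSat SatPsi T φ) ∧
      (¬ HSat SatPsi T φ → SynRej m T φ)
    := by
  intro φ
  induction φ with
  | ex ψ =>
    intro T _
    refine ⟨?_, ?_, ?_⟩
    · rintro ⟨t, ht, hn⟩
      exact ⟨t, ht, sound_yes ψ t hn⟩
    · rintro hrej ⟨t, ht, hsat⟩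
      exact sound_no ψ t (hrej t ht) hsat
    · intro hns t ht
      exact violation_complete ψ t (fun h => hns ⟨t, ht, h⟩)
  | all ψ =>
    intro T _
    refine ⟨?_, ?_, ?_⟩
    · intro hacc t ht
      exact sound_yes ψ t (hacc t ht)
    · rintro ⟨t, ht, hn⟩ hall
      exact sound_no ψ t hn (hall t ht)
    · intro hns
      simp only [HSat] at hns
      push_neg at hns
      obtain ⟨t, ht, hsat⟩ := hns
      exact ⟨t, ht, violation_complete ψ t hsat⟩
  | or φ₁ φ₂ ih₁ ih₂ =>
    intro T hT
    obtain ⟨a1, r1, c1⟩ := ih₁ T hT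
    obtain ⟨a2, r2, c2⟩ := ih₂ T hT
    refine ⟨?_, ?_, ?_⟩
    · rintro (h | h)
      · exact Or.inl (a1 h)
      · exact Or.inr (a2 h)
    · rintro ⟨h1, h2⟩ (h | h)
      · exact r1 h1 h
      · exact r2 h2 h
    · intro h
      exact ⟨c1 (fun x => h (Or.inl x)), c2 (fun x => h (Or.inr x))⟩
  | and φ₁ φ₂ ih₁ ih₂ =>
    intro T hT
    obtain ⟨a1, r1, c1⟩ := ih₁ T hT
    obtain ⟨a2, r2, c2⟩ := ih₂ T hT
    refine ⟨?_, ?_, ?_⟩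
    · rintro ⟨h1, h2⟩
      exact ⟨a1 h1, a2 h2⟩
    · rintro (h | h) ⟨h1, h2⟩
      · exact r1 h h1
      · exact r2 h h2
    · intro h
      by_cases h1 : HSat SatPsi T φ₁
      · exact Or.inr (c2 (fun x => h ⟨h1, x⟩))
      · exact Or.inl (c1 h1)
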